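/- arXiv:2504.03644 — 4 statements merged into one kernel-verified Lean document; each statement's English description precedes it below -/
import Mathlib

section
/- Let R be a finite commutative ring with identity. If quantum fractional revival occurs in the unitary Cayley graph G_R from a vertex u to a vertex v at some time, then for every spectral decomposition (θ_1, …, θ_K; P_1, …, P_K) of the adjacency matrix of G_R and every r ∈ {1, …, K}, either P_r e_v = P_r e_u or P_r e_v = −P_r e_u. -/
open Matrix

/-- The standard basis vector `e_u` in `ℂ^V`. -/
noncomputable def stdVec {V : Type*} (u : V) : V → ℂ :=
  letI := Classical.decEq V
  Pi.single u 1

/-- The transition matrix `H(t) = exp(i t A)` of a graph with adjacency matrix `A`. -/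
noncomputable def transMatrix {V : Type*} [Fintype V] (A : Matrix V V ℂ) (t : ℝ) :
    Matrix V V ℂ :=
  letI := Classical.decEq V
  NormedSpace.exp ((Complex.I * (t : ℂ)) • A)

/-- Quantum fractional revival from `u` to `v` at time `t`. -/
def hasQFR {V : Type*} [Fintype V] (A : Matrix V V ℂ) (u v : V) (t : ℝ) : Prop :=
  u ≠ v ∧ ∃ α β : ℂ, β ≠ 0 ∧
    (transMatrix A t) *ᵥ stdVec u = α • stdVec u + β • stdVec v

/-- The unitary Cayley graph of a commutative ring: distinct `a, b` are adjacent
iff `a - b` is a unit. -/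
def unitaryCayleyGraph (R : Type*) [CommRing R] : SimpleGraph R where
  Adj a b := a ≠ b ∧ IsUnit (a - b)
  symm := by
    constructor
    rintro a b ⟨h1, h2⟩
    refine ⟨h1.symm, ?_⟩
    rw [← neg_sub]
    exact h2.neg
  loopless := ⟨fun a h => h.1 rfl⟩

/-- The adjacency matrix (over `ℂ`) of the unitary Cayley graph of `R`. -/
noncomputable def ucMatrix (R : Type*) [CommRing R] : Matrix R R ℂ :=
  letI := Classical.decEq R
  letI := Classical.decRel (unitaryCayleyGraph R).Adj
  (unitaryCayleyGraph R).adjMatrix ℂ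

/-- The adjacency matrix (over `ℂ`) of a simple graph. -/
noncomputable def adjMat {V : Type*} (G : SimpleGraph V) : Matrix V V ℂ :=
  letI := Classical.decEq V
  letI := Classical.decRel G.Adj
  G.adjMatrix ℂ

/-!
The reflection `x ↦ u + v - x` is an automorphism of the unitary Cayley graph exchanging `u`
and `v`, so it commutes with `H(t)` and turns `H(t) e_u = α e_u + β e_v` into
`H(t) e_v = α e_v + β e_u`. On the range of the spectral idempotent `P_r` the matrix `H(t)` acts
as the scalar `λ = exp(i t θ_r)`, so `a = P_r e_u` and `b = P_r e_v` satisfy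
`λ a = α a + β b` and `λ b = α b + β a`. Thus `(λ - α - β)(a + b) = 0` and
`(λ - α + β)(a - b) = 0`; since `β ≠ 0` the two scalars cannot both vanish, so `b = ±a`.
-/

theorem stdVec_comp_equiv {V : Type*} (σ : Equiv.Perm V) (u : V) :
    stdVec u ∘ σ = stdVec (σ.symm u) := by
  classical
  ext x
  simp only [stdVec, Function.comp_apply, Pi.single_apply]
  exact if_congr σ.eq_symm_apply.symm rfl rfl

-- `Norms.Operator` makes matrices a Banach algebra, which `SemiconjBy.exp_right` needs.
open scoped Norms.Operator in
theorem Matrix.mul_exp_of_mul_eq_smul {n : Type*} [Fintype n] [DecidableEq n]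
    {P X : Matrix n n ℂ} {μ : ℂ} (h : P * X = μ • P) :
    P * NormedSpace.exp X = Complex.exp μ • P := by
  have hP : SemiconjBy P X (algebraMap ℂ _ μ) := by
    rw [SemiconjBy, h, Algebra.smul_def]
  have key := hP.exp_right
  rw [← NormedSpace.algebraMap_exp_comm, ← Complex.exp_eq_exp_ℂ] at key
  rw [Algebra.smul_def]
  exact key

theorem mul_sum_smul_of_orthogonal_idempotent {ι S 𝔸 : Type*} [Fintype ι] [DecidableEq ι]
    [CommSemiring S] [Semiring 𝔸] [Algebra S 𝔸] {P : ι → 𝔸}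
    (horth : ∀ r s, r ≠ s → P r * P s = 0) (hidem : ∀ r, P r * P r = P r)
    (θ : ι → S) (s : ι) :
    P s * ∑ r, θ r • P r = θ s • P s := by
  rw [Finset.mul_sum, Finset.sum_eq_single s
    (fun r _ hr => by rw [mul_smul_comm, horth s r hr.symm, smul_zero]) (by simp),
    mul_smul_comm, hidem]

theorem eq_or_eq_neg_of_smul_eq_add_smul {k M : Type*} [Field k] [NeZero (2 : k)]
    [AddCommGroup M] [Module k M] {a b : M} {c α β : k} (hβ : β ≠ 0)
    (ha : c • a = α • a + β • b) (hb : c • b = α • b + β • a) :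
    b = a ∨ b = -a := by
  by_contra! hne
  have hadd : (c - (α + β)) • (a + b) = 0 := by linear_combination (norm := module) ha + hb
  have hsub : (c - (α - β)) • (a - b) = 0 := by linear_combination (norm := module) ha - hb
  rw [smul_eq_zero, sub_eq_zero] at hadd hsub
  have h1 := hadd.resolve_right (fun h => hne.2 (eq_neg_of_add_eq_zero_right h))
  have h2 := hsub.resolve_right (fun h => hne.1 (sub_eq_zero.mp h).symm)
  have h2β : (2 : k) * β = 0 := by linear_combination h2 - h1
  exact hβ ((mul_eq_zero.mp h2β).resolve_left two_ne_zero)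

section

variable {V : Type*} [Fintype V]

theorem transMatrix_mulVec_comp {A : Matrix V V ℂ} {σ : Equiv.Perm V}
    (hσ : ∀ x y, A (σ x) (σ y) = A x y) (t : ℝ) (f : V → ℂ) :
    transMatrix A t *ᵥ (f ∘ σ) = (transMatrix A t *ᵥ f) ∘ σ := by
  let := Classical.decEq V
  have hA : Commute (σ.permMatrix ℂ) ((Complex.I * t) • A) := by
    refine Commute.smul_right ?_ _
    rw [Commute, SemiconjBy, PEquiv.toMatrix_toPEquiv_mul, PEquiv.mul_toMatrix_toPEquiv]
    ext x y
    simpa using hσ x (σ.symm y)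
  rw [← permMatrix_mulVec, ← permMatrix_mulVec, mulVec_mulVec, mulVec_mulVec, transMatrix,
    hA.exp_right.eq]

theorem transMatrix_mulVec_stdVec_swap {A : Matrix V V ℂ} {σ : Equiv.Perm V}
    (hσ : ∀ x y, A (σ x) (σ y) = A x y) {u v : V} (hu : σ u = v) (hv : σ v = u) {t : ℝ}
    {α β : ℂ} (h : transMatrix A t *ᵥ stdVec u = α • stdVec u + β • stdVec v) :
    transMatrix A t *ᵥ stdVec v = α • stdVec v + β • stdVec u := by
  have hu' : σ.symm v = u := σ.symm_apply_eq.mpr hu.symm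
  have hv' : σ.symm u = v := σ.symm_apply_eq.mpr hv.symm
  calc transMatrix A t *ᵥ stdVec v = transMatrix A t *ᵥ (stdVec u ∘ σ) := by
        rw [stdVec_comp_equiv, hv']
    _ = (α • stdVec u + β • stdVec v) ∘ σ := by rw [transMatrix_mulVec_comp hσ, h]
    _ = α • stdVec v + β • stdVec u := by
        rw [Pi.add_comp, Pi.smul_comp, Pi.smul_comp, stdVec_comp_equiv, stdVec_comp_equiv, hu',
          hv']

theorem mul_transMatrix_of_mul_eq_smul {A P : Matrix V V ℂ} {μ : ℂ} (h : P * A = μ • P)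
    (t : ℝ) : P * transMatrix A t = Complex.exp (Complex.I * t * μ) • P := by
  let := Classical.decEq V
  exact mul_exp_of_mul_eq_smul (by rw [mul_smul_comm, h, smul_smul])

end

section

variable {R : Type*} [CommRing R]

theorem unitaryCayleyGraph_adj_sub_left (c : R) {x y : R} :
    (unitaryCayleyGraph R).Adj (c - x) (c - y) ↔ (unitaryCayleyGraph R).Adj x y := by
  simp only [unitaryCayleyGraph, ne_eq, sub_right_inj, sub_sub_sub_cancel_left, ← neg_sub x y,
    IsUnit.neg_iff]

theorem ucMatrix_sub_left_apply (c x y : R) : ucMatrix R (c - x) (c - y) = ucMatrix R x y := by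
  simp only [ucMatrix, SimpleGraph.adjMatrix_apply]
  congr 1
  exact propext (unitaryCayleyGraph_adj_sub_left c)

end

theorem qfr_commutative_ring_plus_minus_general (R : Type*) [CommRing R]
    [Fintype R]
    (u v : R) (t : ℝ) (h : hasQFR (ucMatrix R) u v t)
    (K : ℕ) (θ : Fin K → ℝ) (P : Fin K → Matrix R R ℂ)
    (horth : ∀ r s, r ≠ s → P r * P s = 0)
    (hidem : ∀ r, P r * P r = P r)
    (hspec : ∑ r, (θ r : ℂ) • P r = ucMatrix R) :
    ∀ r, P r *ᵥ stdVec v = P r *ᵥ stdVec u ∨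
      P r *ᵥ stdVec v = -(P r *ᵥ stdVec u) := by
  intro r
  obtain ⟨-, α, β, hβ, hu⟩ := h
  have hv := transMatrix_mulVec_stdVec_swap (σ := Equiv.subLeft (u + v))
    (ucMatrix_sub_left_apply _) (add_sub_cancel_left u v) (add_sub_cancel_right u v) hu
  have hPA : P r * ucMatrix R = (θ r : ℂ) • P r := by
    classical
    rw [← hspec]
    exact mul_sum_smul_of_orthogonal_idempotent horth hidem _ r
  have hPH := mul_transMatrix_of_mul_eq_smul hPA t
  have project : ∀ {x y : R} {γ δ : ℂ},
      transMatrix (ucMatrix R) t *ᵥ stdVec x = γ • stdVec x + δ • stdVec y →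
      Complex.exp (Complex.I * t * θ r) • (P r *ᵥ stdVec x) =
        γ • (P r *ᵥ stdVec x) + δ • (P r *ᵥ stdVec y) := by
    intro x y γ δ hxy
    rw [← smul_mulVec, ← hPH, ← mulVec_mulVec, hxy, mulVec_add, mulVec_smul, mulVec_smul]
  exact eq_or_eq_neg_of_smul_eq_add_smul hβ (project hu) (project hv)

/-- over a finite commutative ring, QFR forces
`P_r e_v = ± P_r e_u` for every spectral projection. -/
theorem qfr_commutative_ring_plus_minus (R : Type*) [CommRing R]
    [Fintype R] [DecidableEq R]
    (u v : R) (t : ℝ) (h : hasQFR (ucMatrix R) u v t)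
    (K : ℕ) (θ : Fin K → ℝ) (P : Fin K → Matrix R R ℂ)
    (hdist : Function.Injective θ)
    (hherm : ∀ r, (P r).IsHermitian)
    (horth : ∀ r s, r ≠ s → P r * P s = 0)
    (hidem : ∀ r, P r * P r = P r)
    (hsum : ∑ r, P r = (1 : Matrix R R ℂ))
    (hspec : ∑ r, (θ r : ℂ) • P r = ucMatrix R) :
    ∀ r, P r *ᵥ stdVec v = P r *ᵥ stdVec u ∨
      P r *ᵥ stdVec v = -(P r *ᵥ stdVec u) :=
  qfr_commutative_ring_plus_minus_general R u v t h K θ P horth hidem hspec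
end

section
/- Let R_1, …, R_n be finite commutative local rings with identity, with unique maximal ideals M_1, …, M_n of cardinalities m_1, …, m_n respectively, and let R = R_1 × R_2 × ⋯ × R_n. If quantum fractional revival occurs in the unitary Cayley graph G_R from some vertex to another at some time, then m_1 · m_2 ⋯ m_n equals 1 or 2. -/
/-!
The transition matrix `H = exp (i t A)` of a Cayley graph commutes with the translations of the
group, so revival from `u` to `v` forces `H e_w = α e_w + β e_{w + (v - u)}` for every vertex `w`.
Every `x ∈ ker A` is fixed by `H`, hence satisfies `x (a + (u - v)) = c * x a` with
`c = (1 - α) / β`. The unitary Cayley graph of `R₁ × ⋯ × Rₙ` is the tensor product of those of the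
factors, and `e₀ - e_z` lies in the kernel for the factor `Rᵢ` whenever `z ∈ Mᵢ`, because `s` is a
unit iff `s - z` is. Testing the relation on `(e₀ - e_z)(rᵢ)`, and on
`(e₀ - e_z)(rᵢ) · (e₀ - e_w)(rⱼ)` with `w = (u - v)ⱼ`, shows that `u - v` has `z` in coordinate `i`
and `0` elsewhere, for every nonzero `z` in every `Mᵢ`. So at most one `Mᵢ` is nonzero, and that
one is `{0, z}`.
-/

open Matrix

namespace Matrix

variable {V : Type*} [Fintype V] [DecidableEq V]

theorem exp_mulVec_of_mulVec_eq_zero {M : Matrix V V ℂ} {x : V → ℂ} (hx : M *ᵥ x = 0) :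
    NormedSpace.exp M *ᵥ x = x := by
  -- any norm inducing the entrywise topology would do: it is only used to sum the series
  let _ : NormedRing (Matrix V V ℂ) := Matrix.linftyOpNormedRing
  let _ : NormedAlgebra ℂ (Matrix V V ℂ) := Matrix.linftyOpNormedAlgebra
  have hpow : ∀ k ≠ 0, ((k.factorial : ℂ)⁻¹ • M ^ k) *ᵥ x = 0 := by
    rintro (_ | k) hk
    · contradiction
    · rw [smul_mulVec, pow_succ, ← mulVec_mulVec, hx, mulVec_zero, smul_zero]
  have hsum := (NormedSpace.exp_series_hasSum_exp' (𝕂 := ℂ) M).map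
    (mulVec.addMonoidHomLeft x) (continuous_id.matrix_mulVec continuous_const)
  exact (hsum.unique (hasSum_single 0 hpow)).trans (by simp)

theorem commute_permMatrix_iff {R : Type*} [NonAssocSemiring R] {M : Matrix V V R}
    (σ : Equiv.Perm V) : Commute M (σ.permMatrix R) ↔ ∀ a b, M (σ a) (σ b) = M a b := by
  rw [Commute, SemiconjBy, PEquiv.mul_toMatrix_toPEquiv, PEquiv.toMatrix_toPEquiv_mul,
    ← Matrix.ext_iff]
  refine ⟨fun h a b => ?_, fun h a b => ?_⟩
  · simpa using (h a (σ b)).symm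
  · simpa using (h a (σ.symm b)).symm

theorem exp_apply_perm_apply_perm {M : Matrix V V ℂ} (σ : Equiv.Perm V)
    (hM : ∀ a b, M (σ a) (σ b) = M a b) (a b : V) :
    NormedSpace.exp M (σ a) (σ b) = NormedSpace.exp M a b :=
  (commute_permMatrix_iff σ).1 ((commute_permMatrix_iff σ).2 hM).exp_left a b

end Matrix

section StdVecDiff

variable {S : Type*} [Zero S] {y z : S}

theorem stdVec_zero_sub_stdVec_apply_zero (hz : z ≠ 0) : (stdVec 0 - stdVec z : S → ℂ) 0 = 1 := by
  simp [stdVec, hz.symm]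

theorem stdVec_zero_sub_stdVec_apply_self (hz : z ≠ 0) :
    (stdVec 0 - stdVec z : S → ℂ) z = -1 := by
  simp [stdVec, hz]

theorem stdVec_zero_sub_stdVec_apply_of_ne (hy : y ≠ 0) (hyz : y ≠ z) :
    (stdVec 0 - stdVec z : S → ℂ) y = 0 := by
  simp [stdVec, hy, hyz]

end StdVecDiff

section TransitionMatrix

variable {V : Type*} [Fintype V]

theorem transMatrix_mulVec_of_mulVec_eq_zero {A : Matrix V V ℂ} {x : V → ℂ} (hx : A *ᵥ x = 0)
    (t : ℝ) : transMatrix A t *ᵥ x = x := by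
  classical
  exact exp_mulVec_of_mulVec_eq_zero (by rw [smul_mulVec, hx, smul_zero])

theorem transMatrix_add_add [AddGroup V] {A : Matrix V V ℂ}
    (hA : ∀ a b c, A (a + c) (b + c) = A a b) (t : ℝ) (a b c : V) :
    transMatrix A t (a + c) (b + c) = transMatrix A t a b := by
  classical
  exact exp_apply_perm_apply_perm (Equiv.addRight c) (fun a b => by simp [hA]) a b

theorem hasQFR.exists_forall_ker_apply_add_eq_mul [AddCommGroup V] {A : Matrix V V ℂ}
    (hA : ∀ a b c, A (a + c) (b + c) = A a b) {u v : V} {t : ℝ} (h : hasQFR A u v t) :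
    ∃ c : ℂ, ∀ x, A *ᵥ x = 0 → ∀ a, x (a + (u - v)) = c * x a := by
  classical
  obtain ⟨-, α, β, hβ, hcol⟩ := h
  have hH : ∀ a b, transMatrix A t a b =
      α * stdVec u (a + (u - b)) + β * stdVec v (a + (u - b)) := by
    intro a b
    rw [← transMatrix_add_add hA t a b (u - b), add_sub_cancel]
    simpa [stdVec, mulVec_single_one] using congrFun hcol (a + (u - b))
  refine ⟨(1 - α) / β, fun x hx a => ?_⟩
  have hHx : (transMatrix A t *ᵥ x) a = α * x a + β * x (a + (u - v)) := by
    have hsolve : ∀ b w : V, a + (u - b) = w ↔ b = a + (u - w) := fun b w => by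
      constructor <;> rintro rfl <;> abel
    simp [mulVec, dotProduct, hH, stdVec, Pi.single_apply, add_mul, Finset.sum_add_distrib, hsolve]
  rw [transMatrix_mulVec_of_mulVec_eq_zero hx] at hHx
  rw [div_mul_eq_mul_div, eq_div_iff hβ]
  linear_combination -hHx

end TransitionMatrix

section UnitaryCayleyGraph

open IsLocalRing

variable {S : Type*} [CommRing S]

theorem unitaryCayleyGraph_adj_add_add (a b c : S) :
    (unitaryCayleyGraph S).Adj (a + c) (b + c) ↔ (unitaryCayleyGraph S).Adj a b := by
  simp [unitaryCayleyGraph]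

theorem ucMatrix_add_add (a b c : S) : ucMatrix S (a + c) (b + c) = ucMatrix S a b := by
  simp only [ucMatrix, SimpleGraph.adjMatrix_apply]
  classical exact if_congr (unitaryCayleyGraph_adj_add_add a b c) rfl rfl

theorem unitaryCayleyGraph_adj_iff [Nontrivial S] {a b : S} :
    (unitaryCayleyGraph S).Adj a b ↔ IsUnit (a - b) :=
  ⟨And.right, fun h => ⟨fun hab => by simp [hab] at h, h⟩⟩

theorem unitaryCayleyGraph_adj_iff_of_mem_maximalIdeal [IsLocalRing S] {z : S}
    (hz : z ∈ maximalIdeal S) (s : S) :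
    (unitaryCayleyGraph S).Adj s z ↔ (unitaryCayleyGraph S).Adj s 0 := by
  rw [unitaryCayleyGraph_adj_iff, unitaryCayleyGraph_adj_iff, sub_zero, ← notMem_maximalIdeal,
    ← notMem_maximalIdeal, Submodule.sub_mem_iff_left _ hz]

theorem ucMatrix_mulVec_stdVec_zero_sub_stdVec [IsLocalRing S] [Fintype S] {z : S}
    (hz : z ∈ maximalIdeal S) : ucMatrix S *ᵥ (stdVec 0 - stdVec z) = 0 := by
  ext s
  rw [mulVec_sub, Pi.sub_apply, Pi.zero_apply, sub_eq_zero]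
  simp only [stdVec, mulVec_single_one, ucMatrix]
  classical exact if_congr (unitaryCayleyGraph_adj_iff_of_mem_maximalIdeal hz s).symm rfl rfl

end UnitaryCayleyGraph

section Pi

variable {ι : Type*} {R : ι → Type*} [∀ i, CommRing (R i)]

theorem unitaryCayleyGraph_pi_adj_iff [Nonempty ι] [∀ i, Nontrivial (R i)] {a b : ∀ i, R i} :
    (unitaryCayleyGraph (∀ i, R i)).Adj a b ↔ ∀ i, (unitaryCayleyGraph (R i)).Adj (a i) (b i) := by
  obtain ⟨i⟩ := ‹Nonempty ι›
  have := Pi.nontrivial_at (f := R) i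
  simp only [unitaryCayleyGraph_adj_iff, Pi.isUnit_iff, Pi.sub_apply]

variable [Fintype ι]

theorem ucMatrix_pi_apply [Nonempty ι] [∀ i, Nontrivial (R i)] (a b : ∀ i, R i) :
    ucMatrix (∀ i, R i) a b = ∏ i, ucMatrix (R i) (a i) (b i) := by
  simp only [ucMatrix, SimpleGraph.adjMatrix_apply, Fintype.prod_boole]
  classical exact if_congr unitaryCayleyGraph_pi_adj_iff rfl rfl

variable [DecidableEq ι] [∀ i, Fintype (R i)]

theorem ucMatrix_pi_mulVec_prod [Nonempty ι] [∀ i, Nontrivial (R i)] (g : ∀ i, R i → ℂ)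
    (a : ∀ i, R i) :
    (ucMatrix (∀ i, R i) *ᵥ fun r => ∏ i, g i (r i)) a = ∏ i, (ucMatrix (R i) *ᵥ g i) (a i) := by
  simp only [mulVec, dotProduct, ucMatrix_pi_apply, ← Finset.prod_mul_distrib]
  rw [Finset.prod_univ_sum, Fintype.piFinset_univ]

theorem ucMatrix_pi_mulVec_prod_eq_zero [∀ i, Nontrivial (R i)] {g : ∀ i, R i → ℂ} (i : ι)
    (hg : ucMatrix (R i) *ᵥ g i = 0) : ucMatrix (∀ i, R i) *ᵥ (fun r => ∏ i, g i (r i)) = 0 := by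
  have : Nonempty ι := ⟨i⟩
  ext a
  rw [ucMatrix_pi_mulVec_prod]
  exact Finset.prod_eq_zero (Finset.mem_univ i) (by rw [hg, Pi.zero_apply])

section LocalRing

open IsLocalRing

variable [∀ i, IsLocalRing (R i)]

theorem ucMatrix_pi_mulVec_eq_zero_of_mem_maximalIdeal (i : ι) {z : R i}
    (hz : z ∈ maximalIdeal (R i)) :
    ucMatrix (∀ i, R i) *ᵥ (fun r => (stdVec 0 - stdVec z : R i → ℂ) (r i)) = 0 := by
  convert ucMatrix_pi_mulVec_prod_eq_zero (g := Function.update (fun _ _ => 1) i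
    (stdVec 0 - stdVec z)) i (by simpa using ucMatrix_mulVec_stdVec_zero_sub_stdVec hz) with r
  rw [Fintype.prod_eq_single i fun j hj => by simp [hj], Function.update_self]

theorem ucMatrix_pi_mulVec_mul_eq_zero_of_mem_maximalIdeal {i j : ι} (hij : i ≠ j) {z : R i}
    (hz : z ∈ maximalIdeal (R i)) (h : R j → ℂ) :
    ucMatrix (∀ i, R i) *ᵥ (fun r => (stdVec 0 - stdVec z : R i → ℂ) (r i) * h (r j)) = 0 := by
  convert ucMatrix_pi_mulVec_prod_eq_zero (g := Function.update (Function.update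
    (fun _ _ => 1) j h) i (stdVec 0 - stdVec z)) i
    (by simpa using ucMatrix_mulVec_stdVec_zero_sub_stdVec hz) with r
  rw [Finset.prod_eq_mul i j hij (fun k _ hk => by simp [hk.1, hk.2]) (by simp) (by simp),
    Function.update_self, Function.update_of_ne hij.symm, Function.update_self]

theorem eq_piSingle_of_forall_ker_apply_add_eq_mul {e : ∀ i, R i} (he : e ≠ 0) {c : ℂ}
    (hc : ∀ x, ucMatrix (∀ i, R i) *ᵥ x = 0 → ∀ a, x (a + e) = c * x a) {i : ι} {z : R i}
    (hz : z ∈ maximalIdeal (R i)) (hz0 : z ≠ 0) : e = Pi.single i z := by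
  have hf0 := stdVec_zero_sub_stdVec_apply_zero hz0
  have hshift : ∀ a : ∀ i, R i, (stdVec 0 - stdVec z : R i → ℂ) (a i + e i) =
      c * (stdVec 0 - stdVec z : R i → ℂ) (a i) :=
    hc _ (ucMatrix_pi_mulVec_eq_zero_of_mem_maximalIdeal i hz)
  have hfe : (stdVec 0 - stdVec z : R i → ℂ) (e i) = c := by
    simpa only [Pi.zero_apply, zero_add, hf0, mul_one] using hshift 0
  have hc0 : c ≠ 0 := by
    rintro rfl
    simpa only [Pi.neg_apply, neg_add_cancel, hf0, zero_mul, one_ne_zero] using hshift (-e)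
  have he_off : ∀ j ≠ i, e j = 0 := by
    intro j hji
    by_contra hej
    have := hc _ (ucMatrix_pi_mulVec_mul_eq_zero_of_mem_maximalIdeal hji.symm hz
      (stdVec 0 - stdVec (e j) : R j → ℂ)) 0
    simp only [zero_add, Pi.zero_apply, hfe, hf0, stdVec_zero_sub_stdVec_apply_zero hej,
      stdVec_zero_sub_stdVec_apply_self hej] at this
    exact hc0 (by linear_combination -this / 2)
  have hei : e i = z := by
    by_contra hne
    have hei0 : e i ≠ 0 := fun h0 => he (funext fun j => by
      by_cases hj : j = i
      · subst hj; exact h0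
      · exact he_off j hj)
    rw [stdVec_zero_sub_stdVec_apply_of_ne hei0 hne] at hfe
    exact hc0 hfe.symm
  funext j
  by_cases hj : j = i
  · subst hj; simp [hei]
  · simp [hj, he_off j hj]

end LocalRing

end Pi

section Counting

open IsLocalRing

variable {ι : Type*} [Fintype ι] [DecidableEq ι] {R : ι → Type*} [∀ i, CommRing (R i)]
  [∀ i, IsLocalRing (R i)]

theorem prod_card_maximalIdeal_eq_one_or_two_of_forall_eq_piSingle (e : ∀ i, R i)
    (he : ∀ i, ∀ z ∈ maximalIdeal (R i), z ≠ 0 → e = Pi.single i z) :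
    ∏ i, Nat.card (maximalIdeal (R i)) = 1 ∨ ∏ i, Nat.card (maximalIdeal (R i)) = 2 := by
  by_cases hbot : ∀ i, maximalIdeal (R i) = ⊥
  · left
    exact Finset.prod_eq_one fun i _ => by rw [hbot i]; simp
  · right
    obtain ⟨i, hi⟩ := not_forall.1 hbot
    obtain ⟨z, hz, hz0⟩ := Submodule.exists_mem_ne_zero_of_ne_bot hi
    have hother : ∀ j ≠ i, maximalIdeal (R j) = ⊥ := by
      intro j hj
      refine (Submodule.eq_bot_iff _).2 fun w hw => by_contra fun hw0 => hw0 ?_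
      simpa [hj] using congrFun ((he j w hw hw0).symm.trans (he i z hz hz0)) j
    have hMi : (maximalIdeal (R i) : Set (R i)) = {0, z} := by
      ext w
      refine ⟨fun hw => or_iff_not_imp_left.2 fun hw0 => ?_, ?_⟩
      · simpa using congrFun ((he i w hw hw0).symm.trans (he i z hz hz0)) i
      · rintro (rfl | rfl)
        exacts [zero_mem _, hz]
    rw [Fintype.prod_eq_single i fun j hj => by rw [hother j hj]; simp, ← SetLike.coe_sort_coe,
      Nat.card_coe_set_eq, hMi, Set.ncard_pair hz0.symm]

end Counting

/-- if QFR occurs in the unitary Cayley graph of a product of finite local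
rings with maximal ideals of sizes `m_1, …, m_n`, then `m_1 ⋯ m_n = 1` or `2`. -/
theorem qfr_product_local_rings_maximal_ideal_card (n : ℕ) (R : Fin n → Type*)
    [∀ i, CommRing (R i)] [∀ i, IsLocalRing (R i)] [∀ i, Fintype (R i)]
    (m : Fin n → ℕ)
    (hm : ∀ i, Nat.card (IsLocalRing.maximalIdeal (R i)) = m i)
    (h : ∃ u v t, hasQFR (ucMatrix (∀ i, R i)) u v t) :
    ∏ i, m i = 1 ∨ ∏ i, m i = 2 := by
  obtain ⟨u, v, t, h⟩ := h
  obtain ⟨c, hc⟩ := h.exists_forall_ker_apply_add_eq_mul ucMatrix_add_add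
  simp only [← hm]
  exact prod_card_maximalIdeal_eq_one_or_two_of_forall_eq_piSingle (u - v) fun i z hz hz0 =>
    eq_piSingle_of_forall_ker_apply_add_eq_mul (sub_ne_zero.2 h.1) hc hz hz0
end

section
/- Let F be a finite field of odd cardinality q. Then the unitary Cayley graph of the product ring F × ℤ/2ℤ has quantum fractional revival at time t = 2π/q; more precisely, for each a ∈ F, exp(i·(2π/q)·A)·e_{(a,0)} = cos(2π/q)·e_{(a,0)} − i·sin(2π/q)·e_{(a,1)}, where A is the adjacency matrix of the unitary Cayley graph of F × ℤ/2ℤ, and in particular this graph has QFR from (a,0) to (a,1) at time 2π/q. -/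
open Matrix

open scoped Kronecker

/-! For fields `K`, `L` the unitary Cayley graph of `K × L` is the tensor product of the complete
graphs on `K` and `L`: its adjacency matrix is the Kronecker product of theirs, so
`A (x ⊗ y) = μ ε (x ⊗ y)` whenever `x`, `y` are eigenvectors of the complete graphs with
eigenvalues `μ`, `ε`. On `F` with `|F| = q` the eigenvalues are `q - 1` (constants) and `-1`
(vectors of sum zero); at `t = 2π/q` the two agree in `exp(i t μ ε)`, so
`H(t) (e_a ⊗ y) = exp(-i t ε) (e_a ⊗ y)`. Splitting `e_0 = (1/2, 1/2) + (1/2, -1/2)` into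
eigenvectors on `ℤ/2` with `ε = 1` and `ε = -1` gives
`H(t) e_{(a,0)} = cos t e_{(a,0)} - i sin t e_{(a,1)}`, and `sin(2π/q) ≠ 0` as `q ≥ 3` is odd. -/

namespace Matrix

theorem exp_mulVec_of_mulVec_eq_smul {n : Type*} [Fintype n] [DecidableEq n]
    {A : Matrix n n ℂ} {v : n → ℂ} {μ : ℂ} (h : A *ᵥ v = μ • v) :
    NormedSpace.exp A *ᵥ v = Complex.exp μ • v := by
  let _ : NormedRing (Matrix n n ℂ) := Matrix.linftyOpNormedRing
  let _ : NormedAlgebra ℂ (Matrix n n ℂ) := Matrix.linftyOpNormedAlgebra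
  have hpow (k : ℕ) : (A ^ k) *ᵥ v = μ ^ k • v := by
    induction k with
    | zero => simp
    | succ k ih => rw [pow_succ', ← mulVec_mulVec, ih, mulVec_smul, h, smul_smul, pow_succ]
  have hA := (NormedSpace.exp_series_hasSum_exp' (𝕂 := ℂ) A).map (mulVec.addMonoidHomLeft v)
    (continuous_id.matrix_mulVec continuous_const)
  have hμ := (NormedSpace.exp_series_hasSum_exp' (𝕂 := ℂ) μ).smul_const v
  rw [← Complex.exp_eq_exp_ℂ] at hμ
  refine hA.unique (hμ.congr_fun fun k => ?_)
  simp [mulVec.addMonoidHomLeft, smul_mulVec, hpow, smul_smul]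

end Matrix

theorem transMatrix_mulVec_of_mulVec_eq_smul {V : Type*} [Fintype V] {A : Matrix V V ℂ}
    {v : V → ℂ} {μ : ℂ} (h : A *ᵥ v = μ • v) (t : ℝ) :
    transMatrix A t *ᵥ v = Complex.exp (Complex.I * t * μ) • v := by
  classical
  refine exp_mulVec_of_mulVec_eq_smul ?_
  rw [smul_mulVec, h, smul_smul]

theorem unitaryCayleyGraph_prod_adj_iff {K L : Type*} [Field K] [Field L] {u v : K × L} :
    (unitaryCayleyGraph (K × L)).Adj u v ↔ u.1 ≠ v.1 ∧ u.2 ≠ v.2 := by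
  change u ≠ v ∧ IsUnit (u - v) ↔ _
  simp only [Prod.isUnit_iff, isUnit_iff_ne_zero, Prod.fst_sub, Prod.snd_sub, sub_ne_zero]
  exact ⟨And.right, fun h => ⟨fun huv => h.1 (congrArg Prod.fst huv), h⟩⟩

theorem ucMatrix_prod_eq_kronecker {K L : Type*} [Field K] [Field L] [DecidableEq K]
    [DecidableEq L] :
    ucMatrix (K × L) = (⊤ : SimpleGraph K).adjMatrix ℂ ⊗ₖ (⊤ : SimpleGraph L).adjMatrix ℂ := by
  ext u v
  by_cases h : u.1 = v.1 <;> simp [ucMatrix, unitaryCayleyGraph_prod_adj_iff, h]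

def tensorVec {R K L : Type*} [Mul R] (x : K → R) (y : L → R) : K × L → R :=
  fun z => x z.1 * y z.2

theorem add_tensorVec {R K L : Type*} [Distrib R] (x x' : K → R) (y : L → R) :
    tensorVec (x + x') y = tensorVec x y + tensorVec x' y := by
  ext z
  exact add_mul _ _ _

theorem tensorVec_add {R K L : Type*} [Distrib R] (x : K → R) (y y' : L → R) :
    tensorVec x (y + y') = tensorVec x y + tensorVec x y' := by
  ext z
  exact mul_add _ _ _

theorem smul_tensorVec_smul {R K L : Type*} [CommSemigroup R] (a b : R) (x : K → R) (y : L → R) :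
    tensorVec (a • x) (b • y) = (a * b) • tensorVec x y := by
  ext z
  simp only [tensorVec, Pi.smul_apply, smul_eq_mul]
  exact mul_mul_mul_comm _ _ _ _

theorem kronecker_mulVec_tensorVec {R l m n p : Type*} [CommSemiring R] [Fintype m] [Fintype p]
    (A : Matrix l m R) (B : Matrix n p R) (x : m → R) (y : p → R) :
    (A ⊗ₖ B) *ᵥ tensorVec x y = tensorVec (A *ᵥ x) (B *ᵥ y) := by
  ext ⟨i, k⟩
  simp only [mulVec, dotProduct, tensorVec, kroneckerMap_apply, Fintype.sum_prod_type,
    Finset.sum_mul_sum]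
  exact Finset.sum_congr rfl fun _ _ => Finset.sum_congr rfl fun _ _ => by ring

namespace SimpleGraph

theorem adjMatrix_top_mulVec_apply {R V : Type*} [Ring R] [Fintype V] [DecidableEq V]
    (x : V → R) (v : V) : ((⊤ : SimpleGraph V).adjMatrix R *ᵥ x) v = ∑ u, x u - x v := by
  rw [adjMatrix_mulVec_apply, neighborFinset_top, eq_sub_iff_add_eq,
    ← Finset.sum_singleton x v, Finset.sum_compl_add_sum]

theorem adjMatrix_top_mulVec_const {R V : Type*} [Ring R] [Fintype V] [DecidableEq V] (c : R) :
    (⊤ : SimpleGraph V).adjMatrix R *ᵥ (fun _ => c) = ((Fintype.card V : R) - 1) • fun _ => c := by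
  ext v
  rw [adjMatrix_top_mulVec_apply]
  simp [sub_mul]

theorem adjMatrix_top_mulVec_of_sum_eq_zero {R V : Type*} [Ring R] [Fintype V] [DecidableEq V]
    {x : V → R} (hx : ∑ u, x u = 0) : (⊤ : SimpleGraph V).adjMatrix R *ᵥ x = (-1 : R) • x := by
  ext v
  rw [adjMatrix_top_mulVec_apply, hx]
  simp

end SimpleGraph

theorem stdVec_prod {K L : Type*} (a : K) (b : L) :
    stdVec (a, b) = tensorVec (stdVec a) (stdVec b) := by
  classical
  ext ⟨c, d⟩
  by_cases hc : c = a <;> simp [stdVec, tensorVec, Pi.single_apply, hc]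

theorem sum_stdVec {V : Type*} [Fintype V] (a : V) : ∑ v, stdVec a v = 1 := by
  classical
  simp [stdVec]

theorem transMatrix_ucMatrix_prod_mulVec_tensorVec {K L : Type*} [Field K] [Field L] [Fintype K]
    [Fintype L] [DecidableEq K] [DecidableEq L] {x : K → ℂ} {y : L → ℂ} {μ ε : ℂ}
    (hx : (⊤ : SimpleGraph K).adjMatrix ℂ *ᵥ x = μ • x)
    (hy : (⊤ : SimpleGraph L).adjMatrix ℂ *ᵥ y = ε • y) (t : ℝ) :
    transMatrix (ucMatrix (K × L)) t *ᵥ tensorVec x y =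
      Complex.exp (Complex.I * t * (μ * ε)) • tensorVec x y := by
  refine transMatrix_mulVec_of_mulVec_eq_smul ?_ t
  rw [ucMatrix_prod_eq_kronecker, kronecker_mulVec_tensorVec, hx, hy, smul_tensorVec_smul]

theorem transMatrix_ucMatrix_prod_mulVec_stdVec_tensorVec {K L : Type*} [Field K] [Field L]
    [Fintype K] [Fintype L] [DecidableEq K] [DecidableEq L] (a : K) {y : L → ℂ} {ε : ℤ}
    (hy : (⊤ : SimpleGraph L).adjMatrix ℂ *ᵥ y = (ε : ℂ) • y) :
    transMatrix (ucMatrix (K × L)) (2 * Real.pi / Fintype.card K) *ᵥ tensorVec (stdVec a) y =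
      Complex.exp (-(Complex.I * (2 * Real.pi / Fintype.card K : ℝ) * ε)) •
        tensorVec (stdVec a) y := by
  set q : ℂ := (Fintype.card K : ℂ)
  have hq : q ≠ 0 := Nat.cast_ne_zero.2 Fintype.card_ne_zero
  set mean : K → ℂ := fun _ => q⁻¹
  have hsum : ∑ c, (stdVec a - mean) c = 0 := by
    simp [Finset.sum_sub_distrib, sum_stdVec, mean, q, hq]
  have hmean := transMatrix_ucMatrix_prod_mulVec_tensorVec
    (SimpleGraph.adjMatrix_top_mulVec_const (V := K) q⁻¹) hy (2 * Real.pi / Fintype.card K)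
  have hrest := transMatrix_ucMatrix_prod_mulVec_tensorVec
    (SimpleGraph.adjMatrix_top_mulVec_of_sum_eq_zero hsum) hy (2 * Real.pi / Fintype.card K)
  -- `I t q ε = 2π i ε` at `t = 2π / q`, so the eigenvalue `q - 1` acts like `-1`
  have hperiod : Complex.exp (Complex.I * (2 * Real.pi / Fintype.card K : ℝ) * ((q - 1) * ε)) =
      Complex.exp (-(Complex.I * (2 * Real.pi / Fintype.card K : ℝ) * ε)) := by
    calc _ = Complex.exp (-(Complex.I * (2 * Real.pi / Fintype.card K : ℝ) * ε) +
          ε * (2 * Real.pi * Complex.I)) := by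
            congr 1
            push_cast
            field_simp
            ring
      _ = _ := by rw [Complex.exp_add, Complex.exp_int_mul_two_pi_mul_I, mul_one]
  rw [← add_sub_cancel mean (stdVec a), add_tensorVec, mulVec_add, hmean, hrest, hperiod,
    neg_one_mul, mul_neg, smul_add]

theorem transMatrix_ucMatrix_mulVec_stdVec_zero {F : Type*} [Field F] [Fintype F] (a : F) :
    transMatrix (ucMatrix (F × ZMod 2)) (2 * Real.pi / Fintype.card F) *ᵥ
        stdVec (a, (0 : ZMod 2)) =
      (Real.cos (2 * Real.pi / Fintype.card F) : ℂ) • stdVec (a, (0 : ZMod 2)) -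
        (Complex.I * Real.sin (2 * Real.pi / Fintype.card F)) • stdVec (a, (1 : ZMod 2)) := by
  classical
  have hsym : (⊤ : SimpleGraph (ZMod 2)).adjMatrix ℂ *ᵥ (fun _ => 1 / 2) =
      ((1 : ℤ) : ℂ) • fun _ => 1 / 2 := by
    rw [SimpleGraph.adjMatrix_top_mulVec_const]
    norm_num
  have hanti : (⊤ : SimpleGraph (ZMod 2)).adjMatrix ℂ *ᵥ (stdVec 0 - fun _ => 1 / 2) =
      ((-1 : ℤ) : ℂ) • (stdVec 0 - fun _ => 1 / 2) := by
    rw [SimpleGraph.adjMatrix_top_mulVec_of_sum_eq_zero]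
    · norm_num
    · simp [Finset.sum_sub_distrib, sum_stdVec]
  have hsplit : stdVec (a, (0 : ZMod 2)) =
      tensorVec (stdVec a) (fun _ => 1 / 2) +
        tensorVec (stdVec a) (stdVec 0 - fun _ => 1 / 2) := by
    rw [← tensorVec_add, add_sub_cancel, stdVec_prod]
  rw [hsplit, mulVec_add, transMatrix_ucMatrix_prod_mulVec_stdVec_tensorVec a hsym,
    transMatrix_ucMatrix_prod_mulVec_stdVec_tensorVec a hanti, stdVec_prod]
  set t : ℝ := 2 * Real.pi / Fintype.card F
  have hcos : Complex.cos t =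
      (Complex.exp (-(Complex.I * t)) + Complex.exp (Complex.I * t)) / 2 := by
    rw [Complex.cos]
    ring_nf
  have hsin : Complex.I * Complex.sin t =
      (Complex.exp (Complex.I * t) - Complex.exp (-(Complex.I * t))) / 2 := by
    rw [Complex.sin, mul_comm (t : ℂ), neg_mul]
    ring_nf
    rw [Complex.I_sq]
    ring
  ext ⟨b, y⟩
  obtain rfl | rfl : y = 0 ∨ y = 1 := by revert y; decide
  all_goals by_cases hb : b = a <;> simp [tensorVec, stdVec, hb, hcos, hsin]
  all_goals ring

theorem sin_two_pi_div_pos {n : ℕ} (hn : 3 ≤ n) : 0 < Real.sin (2 * Real.pi / n) := by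
  have hn' : (3 : ℝ) ≤ n := by exact_mod_cast hn
  apply Real.sin_pos_of_pos_of_lt_pi (by positivity)
  rw [div_lt_iff₀ (by positivity)]
  nlinarith [Real.pi_pos]

/-- for a finite field `F` of odd cardinality `q`, the unitary Cayley graph
of `F × ℤ/2` has QFR at time `2π/q`:
`H(2π/q) e_{(a,0)} = cos(2π/q) e_{(a,0)} - i sin(2π/q) e_{(a,1)}`. -/
theorem qfr_field_times_zmod_two (F : Type*) [Field F] [Fintype F] (q : ℕ)
    (hq : Fintype.card F = q) (hodd : Odd q) (a : F) :
    (transMatrix (ucMatrix (F × ZMod 2)) (2 * Real.pi / q)) *ᵥ stdVec (a, (0 : ZMod 2)) =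
        ((Real.cos (2 * Real.pi / q) : ℂ)) • stdVec (a, (0 : ZMod 2)) -
          (Complex.I * (Real.sin (2 * Real.pi / q) : ℂ)) • stdVec (a, (1 : ZMod 2)) ∧
      hasQFR (ucMatrix (F × ZMod 2)) (a, (0 : ZMod 2)) (a, (1 : ZMod 2))
        (2 * Real.pi / q) := by
  subst hq
  have hevolve := transMatrix_ucMatrix_mulVec_stdVec_zero a
  have hcard : 3 ≤ Fintype.card F := by
    have := Fintype.one_lt_card (α := F)
    obtain ⟨k, hk⟩ := hodd
    omega
  have hsin : Complex.I * Real.sin (2 * Real.pi / Fintype.card F) ≠ 0 :=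
    mul_ne_zero Complex.I_ne_zero (Complex.ofReal_ne_zero.2 (sin_two_pi_div_pos hcard).ne')
  refine ⟨hevolve, fun h => zero_ne_one (congrArg Prod.snd h),
    Real.cos (2 * Real.pi / Fintype.card F), _, neg_ne_zero.2 hsin, ?_⟩
  rw [hevolve, sub_eq_add_neg, neg_smul]
end

section
/- Let A be the adjacency matrix of the unitary Cayley graph of ℤ/6ℤ (the 6-cycle, with a adjacent to b iff a − b ≡ ±1 mod 6), regarded over ℂ. Then exp(i·(2π/3)·A)·e_0 = −(1/2)·e_0 − i·(√3/2)·e_3; in particular, the unitary Cayley graph of ℤ/6ℤ has quantum fractional revival from vertex 0 to vertex 3 at time t = 2π/3. -/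
open Matrix

/-!
Write `A` for the adjacency matrix of the 6-cycle, `J` for the all-ones matrix, `S` for the matrix
`(-1)^(x+y)` and `Q` for the antipodal permutation `x ↦ x + 3`. Then `A = (J - S)/2 - Q`, where
`J/6` and `S/6` are the spectral projections of the eigenvalues `2` and `-2`, and all three
commute. At `t = 2π/3` the two projection terms of `itA` are `±2πi` times an idempotent, whose
exponential is `1`, while `Q² = 1` gives `exp(-(2πi/3) Q) = cos(2π/3) - i sin(2π/3) Q`. Hence
`H(2π/3) = -1/2 - i(√3/2) Q`.
-/

namespace NormedSpace

variable {𝔸 : Type*} [NormedRing 𝔸] [CompleteSpace 𝔸]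

theorem exp_smul_of_isIdempotentElem {𝕂 : Type*} [RCLike 𝕂] [NormedAlgebra 𝕂 𝔸] {e : 𝔸}
    (he : IsIdempotentElem e) (z : 𝕂) : exp (z • e) = 1 + (exp z - 1) • e := by
  have hscalar := (hasSum_nat_add_iff' 1).mpr (exp_series_hasSum_exp' (𝕂 := 𝕂) z)
  refine (exp_series_hasSum_exp' (𝕂 := 𝕂) (z • e)).unique ((hasSum_nat_add_iff' 1).mp ?_)
  simpa [smul_pow, he.pow_succ_eq, smul_smul] using hscalar.smul_const e

variable [NormedAlgebra ℂ 𝔸]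

open Complex Real in
theorem exp_int_mul_two_pi_mul_I_smul_of_isIdempotentElem {e : 𝔸} (he : IsIdempotentElem e)
    (n : ℤ) : exp ((n * (2 * π * I)) • e) = 1 := by
  rw [exp_smul_of_isIdempotentElem he, ← Complex.exp_eq_exp_ℂ, Complex.exp_int_mul_two_pi_mul_I,
    sub_self, zero_smul, add_zero]

theorem exp_smul_of_mul_self_eq_one [NormedAlgebra ℚ 𝔸] {q : 𝔸} (hq : q * q = 1) (z : ℂ) :
    exp (z • q) = Complex.cosh z • 1 + Complex.sinh z • q := by
  have hp : IsIdempotentElem ((2 : ℂ)⁻¹ • (1 + q)) := by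
    simp only [IsIdempotentElem, smul_mul_smul, add_mul, mul_add, hq, one_mul, mul_one]
    module
  have hsplit : z • q = algebraMap ℂ 𝔸 (-z) + (2 * z) • ((2 : ℂ)⁻¹ • (1 + q)) := by
    rw [Algebra.algebraMap_eq_smul_one]
    module
  have hexp : Complex.exp (-z) * Complex.exp (2 * z) = Complex.exp z := by
    rw [← Complex.exp_add]
    ring_nf
  rw [hsplit, exp_add_of_commute (Algebra.commutes _ _), ← algebraMap_exp_comm,
    exp_smul_of_isIdempotentElem hp, Algebra.algebraMap_eq_smul_one, Complex.cosh, Complex.sinh,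
    smul_mul_assoc, one_mul]
  simp only [← Complex.exp_eq_exp_ℂ]
  match_scalars <;> linear_combination hexp / 2

end NormedSpace

theorem isIdempotentElem_inv_smul_of_mul_self_eq_smul {K A : Type*} [Field K] [Ring A]
    [Algebra K A] {x : A} {c : K} (hc : c ≠ 0) (h : x * x = c • x) :
    IsIdempotentElem (c⁻¹ • x) := by
  rw [IsIdempotentElem, smul_mul_smul, h, smul_smul, mul_assoc, inv_mul_cancel₀ hc, mul_one]

namespace Matrix

variable {V : Type*} [Fintype V] [DecidableEq V]

-- Matrices carry no canonical norm; as in `Matrix.exp_add_of_commute`, one is chosen in the proof.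
open Real Complex in
nonrec theorem exp_int_mul_two_pi_mul_I_smul_of_isIdempotentElem {E : Matrix V V ℂ}
    (hE : IsIdempotentElem E) (n : ℤ) : NormedSpace.exp ((n * (2 * π * I)) • E) = 1 := by
  open scoped Norms.Operator in
  exact NormedSpace.exp_int_mul_two_pi_mul_I_smul_of_isIdempotentElem hE n

nonrec theorem exp_smul_of_mul_self_eq_one {Q : Matrix V V ℂ} (hQ : Q * Q = 1) (z : ℂ) :
    NormedSpace.exp (z • Q) = Complex.cosh z • 1 + Complex.sinh z • Q := by
  open scoped Norms.Operator in
  exact NormedSpace.exp_smul_of_mul_self_eq_one hQ z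

end Matrix

theorem transMatrix_eq_exp {V : Type*} [Fintype V] [DecidableEq V] (A : Matrix V V ℂ) (t : ℝ) :
    transMatrix A t = NormedSpace.exp ((Complex.I * t) • A) := by
  unfold transMatrix
  congr!

theorem stdVec_eq_single {V : Type*} [DecidableEq V] (u : V) : stdVec u = Pi.single u 1 := by
  unfold stdVec
  congr!

namespace CycleSix

def allOnes : Matrix (ZMod 6) (ZMod 6) ℤ := of fun _ _ => 1

def signs : Matrix (ZMod 6) (ZMod 6) ℤ := of fun x y => (-1) ^ (x.val + y.val)

def antipodal : Matrix (ZMod 6) (ZMod 6) ℤ := of fun x y => if x = y + 3 then 1 else 0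

theorem allOnes_mul_self : allOnes * allOnes = 6 • allOnes := by decide

theorem signs_mul_self : signs * signs = 6 • signs := by decide

theorem antipodal_mul_self : antipodal * antipodal = 1 := by decide

theorem commute_allOnes_signs : Commute allOnes signs :=
  (by decide : allOnes * signs = signs * allOnes)

theorem commute_allOnes_antipodal : Commute allOnes antipodal :=
  (by decide : allOnes * antipodal = antipodal * allOnes)

theorem commute_signs_antipodal : Commute signs antipodal :=
  (by decide : signs * antipodal = antipodal * signs)

theorem allOnes_sub_signs_sub_two_smul_antipodal :
    allOnes - signs - 2 • antipodal = of fun x y => if x ≠ y ∧ IsUnit (x - y) then 2 else 0 := by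
  decide

local notation "φ" => RingHom.mapMatrix (Int.castRingHom ℂ)

theorem ucMatrix_eq : ucMatrix (ZMod 6) = (2 : ℂ)⁻¹ • φ (allOnes - signs - 2 • antipodal) := by
  rw [allOnes_sub_signs_sub_two_smul_antipodal]
  ext x y
  simp only [ucMatrix, SimpleGraph.adjMatrix_apply]
  by_cases h : x ≠ y ∧ IsUnit (x - y) <;> simp [unitaryCayleyGraph, h]

theorem isIdempotentElem_inv_six_smul {M : Matrix (ZMod 6) (ZMod 6) ℤ} (hM : M * M = 6 • M) :
    IsIdempotentElem ((6 : ℂ)⁻¹ • φ M) := by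
  refine isIdempotentElem_inv_smul_of_mul_self_eq_smul (by norm_num) ?_
  rw [← map_mul, hM, map_nsmul, ← Nat.cast_smul_eq_nsmul ℂ]
  norm_num

open Real Complex in
theorem smul_ucMatrix_eq :
    (I * ((2 * π / 3 : ℝ) : ℂ)) • ucMatrix (ZMod 6) =
      (((1 : ℤ) : ℂ) * (2 * π * I)) • ((6 : ℂ)⁻¹ • φ allOnes) +
        (((-1 : ℤ) : ℂ) * (2 * π * I)) • ((6 : ℂ)⁻¹ • φ signs) +
        ((-(2 * π / 3) : ℝ) * I) • φ antipodal := by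
  rw [ucMatrix_eq, map_sub, map_sub, map_nsmul]
  push_cast
  module

open Real Complex in
theorem transMatrix_ucMatrix_two_pi_div_three :
    transMatrix (ucMatrix (ZMod 6)) (2 * π / 3) =
      (-(1 / 2) : ℂ) • 1 - (I * ((√3 / 2 : ℝ) : ℂ)) • φ antipodal := by
  have hJS : Commute (φ allOnes) (φ signs) := commute_allOnes_signs.map φ
  have hJQ : Commute (φ allOnes) (φ antipodal) := commute_allOnes_antipodal.map φ
  have hSQ : Commute (φ signs) (φ antipodal) := commute_signs_antipodal.map φ
  have hcos : Real.cos (-(2 * π / 3)) = -(1 / 2) := by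
    rw [Real.cos_neg, show 2 * π / 3 = π - π / 3 by ring, Real.cos_pi_sub, cos_pi_div_three]
  have hsin : Real.sin (-(2 * π / 3)) = -(√3 / 2) := by
    rw [Real.sin_neg, show 2 * π / 3 = π - π / 3 by ring, Real.sin_pi_sub, sin_pi_div_three]
  rw [transMatrix_eq_exp, smul_ucMatrix_eq, exp_add_of_commute, exp_add_of_commute,
    exp_int_mul_two_pi_mul_I_smul_of_isIdempotentElem (isIdempotentElem_inv_six_smul
      allOnes_mul_self),
    exp_int_mul_two_pi_mul_I_smul_of_isIdempotentElem (isIdempotentElem_inv_six_smul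
      signs_mul_self),
    one_mul, one_mul, exp_smul_of_mul_self_eq_one (by rw [← map_mul, antipodal_mul_self, map_one]),
    cosh_mul_I, sinh_mul_I, ← ofReal_cos, ← ofReal_sin, hcos, hsin]
  · push_cast
    module
  · exact ((hJS.smul_left _).smul_left _ |>.smul_right _).smul_right _
  · exact (((hJQ.smul_left _).smul_left _).add_left ((hSQ.smul_left _).smul_left _)).smul_right _

theorem antipodal_mulVec_single_zero : φ antipodal *ᵥ Pi.single 0 1 = Pi.single 3 1 := by
  ext x
  rw [mulVec_single_one]
  simp [antipodal, Pi.single_apply]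

end CycleSix

/-- for the unitary Cayley graph of `ℤ/6` (the 6-cycle),
`H(2π/3) e_0 = -(1/2) e_0 - i (√3/2) e_3`, so QFR occurs from `0` to `3` at `t = 2π/3`. -/
theorem qfr_zmod_six :
    (transMatrix (ucMatrix (ZMod 6)) (2 * Real.pi / 3)) *ᵥ stdVec (0 : ZMod 6) =
        (-(1 / 2 : ℂ)) • stdVec (0 : ZMod 6) -
          (Complex.I * ((Real.sqrt 3 / 2 : ℝ) : ℂ)) • stdVec (3 : ZMod 6) ∧
      hasQFR (ucMatrix (ZMod 6)) (0 : ZMod 6) (3 : ZMod 6) (2 * Real.pi / 3) := by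
  have hrevival : transMatrix (ucMatrix (ZMod 6)) (2 * Real.pi / 3) *ᵥ stdVec (0 : ZMod 6) =
      (-(1 / 2 : ℂ)) • stdVec (0 : ZMod 6) -
        (Complex.I * ((Real.sqrt 3 / 2 : ℝ) : ℂ)) • stdVec (3 : ZMod 6) := by
    rw [CycleSix.transMatrix_ucMatrix_two_pi_div_three, sub_mulVec, smul_mulVec, smul_mulVec,
      one_mulVec, stdVec_eq_single, stdVec_eq_single, CycleSix.antipodal_mulVec_single_zero]
  refine ⟨hrevival, by decide, -(1 / 2), -(Complex.I * ((Real.sqrt 3 / 2 : ℝ) : ℂ)), ?_, ?_⟩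
  · have hsqrt : ((Real.sqrt 3 / 2 : ℝ) : ℂ) ≠ 0 := by exact_mod_cast (by positivity)
    exact neg_ne_zero.mpr (mul_ne_zero Complex.I_ne_zero hsqrt)
  · rw [hrevival, sub_eq_add_neg, ← neg_smul]
end
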